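/- arXiv:1807.07022 — 2 statements merged into one kernel-verified Lean document; each statement's English description precedes it below -/
import Mathlib

section
/- Soundness of the Free rule: for every n ∈ ℕ and every function dictionary Δ, if R = [x, m] ∗ ⊛_{0 ≤ i < m} ⟨x,i⟩ ↦ eᵢ with Vars({x} ∪ {e₀,…,e_{m−1}}) ⊆ Γ, and the specification Σ; Γ; {φ; P} c {Q} is n-valid w.r.t. Δ, then the specification Σ; Γ; {φ; P ∗ R} (free(x); c) {Q} is n-valid w.r.t. Δ. -/
set_option maxHeartbeats 1000000

namespace SSL

/-! ## Basic syntax: variables, values, locations -/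

abbrev Var := String
abbrev Val := Int
abbrev Loc := ℕ

/-- Expressions of the programming language (also used as pure formulae). -/
inductive Expr : Type
  | lit : Val → Expr
  | var : Var → Expr
  | add : Expr → Expr → Expr
  | eq : Expr → Expr → Expr
  | and : Expr → Expr → Expr
  | not : Expr → Expr
  deriving DecidableEq

/-- Stores: finite maps from program variables to values. -/
abbrev Store := Finmap (fun _ : Var => Val)
/-- Heaps: finite partial maps from locations to values. -/
abbrev Heap := Finmap (fun _ : Loc => Val)

/-- Valuation of an expression under a store. -/
def Expr.eval : Expr → Store → Option Val
  | .lit v, _ => some v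
  | .var x, s => s.lookup x
  | .add e₁ e₂, s => do pure ((← e₁.eval s) + (← e₂.eval s))
  | .eq e₁ e₂, s => do pure (if (← e₁.eval s) = (← e₂.eval s) then (1 : Val) else 0)
  | .and e₁ e₂, s => do
      pure (if ((← e₁.eval s) = (1 : Val) ∧ (← e₂.eval s) = (1 : Val)) then (1 : Val) else 0)
  | .not e, s => do pure (if (← e.eval s) = (1 : Val) then (0 : Val) else 1)

/-- A (boolean) expression is true under a store. -/
def Expr.holds (e : Expr) (s : Store) : Prop := e.eval s = some 1

/-- Validity of the pure implication φ ⇒ ψ. -/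
def PImplies (φ ψ : Expr) : Prop := ∀ s : Store, φ.holds s → ψ.holds s

def Expr.vars : Expr → Finset Var
  | .lit _ => ∅
  | .var x => {x}
  | .add e₁ e₂ => e₁.vars ∪ e₂.vars
  | .eq e₁ e₂ => e₁.vars ∪ e₂.vars
  | .and e₁ e₂ => e₁.vars ∪ e₂.vars
  | .not e => e.vars

/-! ## Substitutions -/

abbrev Subst := Var → Option Expr

def Subst.single (x : Var) (e : Expr) : Subst := fun z => if z = x then some e else none

def Subst.ofList (l : List (Var × Expr)) : Subst := fun x => l.lookup x

/-- Union of substitutions (left-biased). -/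
def Subst.union (σ₁ σ₂ : Subst) : Subst := fun x => (σ₁ x).orElse (fun _ => σ₂ x)

def Subst.domain (σ : Subst) : Set Var := {x | (σ x).isSome}

/-- σ is a substitution of values (literals) for exactly the variables in `d`. -/
def IsValSubst (σ : Subst) (d : Finset Var) : Prop :=
  (∀ x, x ∈ d ↔ (σ x).isSome) ∧ (∀ x e, σ x = some e → ∃ v : Val, e = .lit v)

def Expr.subst (σ : Subst) : Expr → Expr
  | .lit v => .lit v
  | .var x => (σ x).getD (.var x)
  | .add e₁ e₂ => .add (e₁.subst σ) (e₂.subst σ)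
  | .eq e₁ e₂ => .eq (e₁.subst σ) (e₂.subst σ)
  | .and e₁ e₂ => .and (e₁.subst σ) (e₂.subst σ)
  | .not e => .not (e.subst σ)

/-! ## Spatial formulae and assertions -/

/-- Spatial formulae; predicate instances carry an optional level tag
    (`none` means the tag has been erased). -/
inductive Spatial : Type
  | emp : Spatial
  | pts : Expr → ℕ → Expr → Spatial   -- ⟨e₁, ι⟩ ↦ e₂
  | blk : Expr → ℕ → Spatial           -- [e, m]
  | pred : String → Option ℕ → List Expr → Spatial  -- p^ℓ(ē)
  | star : Spatial → Spatial → Spatial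
  deriving DecidableEq

def Spatial.vars : Spatial → Finset Var
  | .emp => ∅
  | .pts e₁ _ e₂ => e₁.vars ∪ e₂.vars
  | .blk e _ => e.vars
  | .pred _ _ args => args.foldr (fun e acc => e.vars ∪ acc) ∅
  | .star P Q => P.vars ∪ Q.vars

def Spatial.subst (σ : Subst) : Spatial → Spatial
  | .emp => .emp
  | .pts e₁ ι e₂ => .pts (e₁.subst σ) ι (e₂.subst σ)
  | .blk e m => .blk (e.subst σ) m
  | .pred p t args => .pred p t (args.map (Expr.subst σ))
  | .star P Q => .star (P.subst σ) (Q.subst σ)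

def Spatial.setTags (t : Option ℕ) : Spatial → Spatial
  | .pred p _ args => .pred p t args
  | .star P Q => .star (P.setTags t) (Q.setTags t)
  | s => s

/-- ⌊P⌋: erase all level tags. -/
def Spatial.eraseTags (s : Spatial) : Spatial := s.setTags none

/-- P mentions no level tags. -/
def Spatial.TagFree (s : Spatial) : Prop := s.eraseTags = s

def Spatial.hasPred : Spatial → Prop
  | .pred _ _ _ => True
  | .star P Q => P.hasPred ∨ Q.hasPred
  | _ => False

def Spatial.hasPts : Spatial → Prop
  | .pts _ _ _ => True
  | .star P Q => P.hasPts ∨ Q.hasPts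
  | _ => False

/-- Assertions {φ; P}: a pure part and a spatial part. -/
structure Assn where
  pure : Expr
  spat : Spatial

def Assn.vars (A : Assn) : Finset Var := A.pure.vars ∪ A.spat.vars
def Assn.subst (A : Assn) (σ : Subst) : Assn := ⟨A.pure.subst σ, A.spat.subst σ⟩
def Assn.eraseTags (A : Assn) : Assn := ⟨A.pure, A.spat.eraseTags⟩

/-- Ghosts: GV(Γ, P, Q) = Vars(P) ∖ Γ. -/
def GV (Γ : Finset Var) (P _Q : Assn) : Finset Var := P.vars \ Γ
/-- Existentials: EV(Γ, P, Q) = Vars(Q) ∖ (Γ ∪ Vars(P)). -/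
def EV (Γ : Finset Var) (P Q : Assn) : Finset Var := Q.vars \ (Γ ∪ P.vars)

/-! ## Satisfaction -/

/-- Interpretations of inductive heap predicates. -/
abbrev Interp := String → Heap → List Val → Prop

def evalList (es : List Expr) (s : Store) : Option (List Val) := es.mapM (Expr.eval · s)

/-- Satisfaction of a spatial formula. Blocks have no spatial footprint;
    points-to heaplets are singleton heaps at a non-null base address. -/
def SatS (I : Interp) : Heap → Store → Spatial → Prop
  | h, _, .emp => h = ∅
  | h, s, .pts e₁ ι e₂ =>
      ∃ (l : Loc) (v : Val), 0 < l ∧ e₁.eval s = some (l : Val) ∧ e₂.eval s = some v ∧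
        h = Finmap.singleton (l + ι) v
  | h, _, .blk _ _ => h = ∅
  | h, s, .pred p _ args => ∃ vs, evalList args s = some vs ∧ I p h vs
  | h, s, .star P Q => ∃ h₁ h₂, h₁.Disjoint h₂ ∧ h = h₁ ∪ h₂ ∧ SatS I h₁ s P ∧ SatS I h₂ s Q

/-- Satisfaction ⟨h, s⟩ ⊨ {φ; P}. -/
def Sat (I : Interp) (h : Heap) (s : Store) (A : Assn) : Prop :=
  A.pure.holds s ∧ SatS I h s A.spat

/-! ## Programs and small-step operational semantics -/

inductive Cmd : Type
  | read : Var → Var → ℕ → Cmd       -- let y = *(x + ι)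
  | write : Var → ℕ → Expr → Cmd     -- *(x + ι) := e
  | skip : Cmd
  | error : Cmd
  | ite : Expr → Cmd → Cmd → Cmd
  | call : String → List Expr → Cmd
  | seq : Cmd → Cmd → Cmd
  | malloc : Var → ℕ → Cmd           -- let y = malloc(m)
  | free : Var → ℕ → Cmd             -- free(x), block of m cells
  deriving DecidableEq

structure FunDef where
  name : String
  params : List Var
  body : Cmd

abbrev FunDict := List FunDef

def FunDict.find (Δ : FunDict) (f : String) : Option FunDef := Δ.find? (fun fd => fd.name == f)

def bindStore (xs : List Var) (vs : List Val) : Store :=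
  (xs.zip vs).foldr (fun p acc => acc.insert p.1 p.2) ∅

abbrev Frame := Cmd × Store
abbrev Config := Heap × List Frame

def allocCells (l : Loc) : List Val → Heap → Heap
  | [], h => h
  | v :: vs, h => (allocCells (l + 1) vs h).insert l v

def freeCells (l : Loc) : ℕ → Heap → Heap
  | 0, h => h
  | m + 1, h => (freeCells (l + 1) m h).erase l

/-- Local (single-frame, non-call) steps of atomic commands. -/
inductive HStep : Heap → Cmd → Store → Heap → Cmd → Store → Prop
  | read {h s y x ι} {l : Loc} {v : Val} :
      s.lookup x = some (l : Val) → h.lookup (l + ι) = some v →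
      HStep h (.read y x ι) s h .skip (s.insert y v)
  | write {h s x ι e} {l : Loc} {v v' : Val} :
      s.lookup x = some (l : Val) → h.lookup (l + ι) = some v' → e.eval s = some v →
      HStep h (.write x ι e) s (h.insert (l + ι) v) .skip s
  | malloc {h s y m} {l : Loc} {vs : List Val} :
      0 < l → vs.length = m → (∀ i < m, (l + i) ∉ h) →
      HStep h (.malloc y m) s (allocCells l vs h) .skip (s.insert y (l : Val))
  | free {h s x m} {l : Loc} :
      s.lookup x = some (l : Val) → (∀ i < m, (l + i) ∈ h) →
      HStep h (.free x m) s (freeCells l m h) .skip s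
  | iteTrue {h s e c₁ c₂} : e.holds s → HStep h (.ite e c₁ c₂) s h c₁ s
  | iteFalse {h s e c₁ c₂} {v : Val} : e.eval s = some v → v ≠ 1 →
      HStep h (.ite e c₁ c₂) s h c₂ s

/-- Small-step operational semantics on configurations (heap + stack of frames). -/
inductive Step (Δ : FunDict) : Config → Config → Prop
  | head {h c s h' c' s' S} : HStep h c s h' c' s' →
      Step Δ (h, (c, s) :: S) (h', (c', s') :: S)
  | seqStep {h c₁ s h' c₁' s' c₂ S} : Step Δ (h, (c₁, s) :: S) (h', (c₁', s') :: S) →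
      Step Δ (h, (.seq c₁ c₂, s) :: S) (h', (.seq c₁' c₂, s') :: S)
  | seqSkip {h c s S} : Step Δ (h, (.seq .skip c, s) :: S) (h, (c, s) :: S)
  | call {h s S f args vs fd} : Δ.find f = some fd → evalList args s = some vs →
      Step Δ (h, (.call f args, s) :: S)
             (h, (fd.body, bindStore fd.params vs) :: (.skip, s) :: S)
  | callSeq {h s S f args vs fd c₂} : Δ.find f = some fd → evalList args s = some vs →
      Step Δ (h, (.seq (.call f args) c₂, s) :: S)
             (h, (fd.body, bindStore fd.params vs) :: (c₂, s) :: S)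
  | ret {h s' c s S} : Step Δ (h, (.skip, s') :: (c, s) :: S) (h, (c, s) :: S)

/-- Δ ⊢ cfg ⇝* cfg' -/
def Steps (Δ : FunDict) : Config → Config → Prop := Relation.ReflTransGen (Step Δ)

/-- |h| -/
def heapSize (h : Heap) : ℕ := h.keys.card

/-- Every execution trace from `cfg` is finite. -/
def Terminates (Δ : FunDict) (cfg : Config) : Prop :=
  ¬ ∃ ρ : ℕ → Config, ρ 0 = cfg ∧ ∀ i, Step Δ (ρ i) (ρ (i + 1))

/-! ## Sized validity -/

/-- Sized validity: Σ; Γ; {P} c {Q} is n-valid w.r.t. Δ. -/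
def Valid (I : Interp) (Δ : FunDict) (Γ : Finset Var) (P : Assn) (c : Cmd) (Q : Assn)
    (n : ℕ) : Prop :=
  ∀ (h h' : Heap) (s s' : Store),
    heapSize h ≤ n →
    Steps Δ (h, [(c, s)]) (h', [(.skip, s')]) →
    s.keys = Γ →
    ∀ σgv : Subst, IsValSubst σgv (GV Γ P Q) → Sat I h s (P.subst σgv) →
      ∃ σev : Subst, IsValSubst σev (EV Γ P Q) ∧ Sat I h' s' (Q.subst (σev.union σgv))

/-! ## Contexts: inductive predicates and function specifications -/

structure PredClause where
  guard : Expr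
  pure : Expr
  spat : Spatial

structure PredDef where
  name : String
  params : List Var
  clauses : List PredClause

/-- A well-founded inductive predicate: every clause containing a recursive
    predicate instance also contains at least one points-to heaplet. -/
def PredDef.WF (D : PredDef) : Prop :=
  ∀ cl ∈ D.clauses, cl.spat.hasPred → cl.spat.hasPts

structure FunSpec where
  name : String
  params : List Var
  pre : Assn
  post : Assn

structure Ctx where
  preds : List PredDef
  funs : List FunSpec

/-- The guard of a clause, instantiated by σ, is true (under every store). -/
def ClauseGuardTrue (σ : Subst) (cl : PredClause) : Prop :=
  ∀ s : Store, (cl.guard.subst σ).holds s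

/-- The body of a clause, instantiated by σ, is satisfied by `h` under some
    valuation (store) of the clause's free variables. -/
def ClauseBodySat (I : Interp) (σ : Subst) (cl : PredClause) (h : Heap) : Prop :=
  ∃ s : Store, Sat I h s ⟨cl.pure.subst σ, cl.spat.subst σ⟩

/-- Substitution of the given values for the formal parameters of `D`. -/
def valSubstOf (D : PredDef) (vs : List Val) : Subst :=
  Subst.ofList (D.params.zip (vs.map Expr.lit))

/-- `I` interprets `D` by selecting the *first* clause whose guard holds. -/
def UnfoldsFirst (I : Interp) (D : PredDef) : Prop :=
  ∀ (h : Heap) (vs : List Val),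
    I D.name h vs ↔
      (vs.length = D.params.length ∧
       ∃ j : Fin D.clauses.length,
         (∀ i : Fin D.clauses.length, (i : ℕ) < (j : ℕ) →
            ¬ ClauseGuardTrue (valSubstOf D vs) (D.clauses.get i)) ∧
         ClauseGuardTrue (valSubstOf D vs) (D.clauses.get j) ∧
         ClauseBodySat I (valSubstOf D vs) (D.clauses.get j) h)

/-- `I` interprets `D` via *some* clause whose guard holds. -/
def UnfoldsSome (I : Interp) (D : PredDef) : Prop :=
  ∀ (h : Heap) (vs : List Val),
    I D.name h vs ↔
      (vs.length = D.params.length ∧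
       ∃ j : Fin D.clauses.length,
         ClauseGuardTrue (valSubstOf D vs) (D.clauses.get j) ∧
         ClauseBodySat I (valSubstOf D vs) (D.clauses.get j) h)

/-! ## Coherence of a function dictionary with a list of function specifications -/

inductive Coherent (I : Interp) (n : ℕ) : FunDict → List FunSpec → Prop
  | nil : Coherent I n [] []
  | aux {Δ Φ fd fs} : Coherent I n Δ Φ →
      fd.name = fs.name → fd.params = fs.params →
      Valid I Δ fs.params.toFinset fs.pre fd.body fs.post n →
      Coherent I n (fd :: Δ) (fs :: Φ)
  | recC {Δ Φ fd fs} {φ : Expr} {P' : Spatial} {p : String} {es : List Expr} :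
      Coherent I n Δ Φ →
      fd.name = fs.name → fd.params = fs.params →
      fs.pre = ⟨φ, .star P' (.pred p (some 1) es)⟩ →
      P'.TagFree → fs.post.spat.TagFree →
      (∀ n' < n, Valid I (fd :: Δ) fs.params.toFinset fs.pre fd.body fs.post n') →
      Coherent I n (fd :: Δ) (fs :: Φ)

/-- `fd`/`fs` occur in Δ/Φ as an auxiliary function covered by clause (b)
    of the coherence definition. -/
def AuxCovered (I : Interp) (n : ℕ) (Δ : FunDict) (Φ : List FunSpec)
    (fd : FunDef) (fs : FunSpec) : Prop :=
  ∃ Δ₁ Δ₂ Φ₁ Φ₂, Δ = Δ₁ ++ fd :: Δ₂ ∧ Φ = Φ₁ ++ fs :: Φ₂ ∧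
    fd.name = fs.name ∧ fd.params = fs.params ∧
    Valid I Δ₂ fs.params.toFinset fs.pre fd.body fs.post n

/-- `fd`/`fs` occur in Δ/Φ as the recursive function covered by clause (c)
    of the coherence definition. -/
def RecCovered (I : Interp) (n : ℕ) (Δ : FunDict) (Φ : List FunSpec)
    (fd : FunDef) (fs : FunSpec) : Prop :=
  ∃ (Δ₂ : FunDict) (Φ₂ : List FunSpec) (φ : Expr) (P' : Spatial) (p : String) (es : List Expr),
    Δ = fd :: Δ₂ ∧ Φ = fs :: Φ₂ ∧
    fd.name = fs.name ∧ fd.params = fs.params ∧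
    fs.pre = ⟨φ, .star P' (.pred p (some 1) es)⟩ ∧ P'.TagFree ∧ fs.post.spat.TagFree ∧
    (∀ n' < n, Valid I Δ fs.params.toFinset fs.pre fd.body fs.post n')

/-! ## The SSL transforming-entailment judgment -/

/-- ⊛_{0 ≤ i < |es|} ⟨x, i⟩ ↦ esᵢ -/
def ptsRange (x : Var) (es : List Expr) : Spatial :=
  (es.zipIdx).foldr (fun p acc => .star (.pts (.var x) p.2 p.1) acc) .emp

/-- Nested conditional: if (g₁) {c₁} else {if (g₂) {c₂} … else {c_N}}. -/
def iteChain : List Expr → List Cmd → Cmd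
  | _, [] => .skip
  | _, [c] => c
  | g :: gs, c :: cs => .ite g c (iteChain gs cs)
  | [], c :: _ => c

/-- The SSL judgment Σ; Γ ⊢ {P} ⇝ {Q} | c, inductively generated by the SSL
    rules (Emp, Inconsistency, SubstLeft, NullNotLVal, StarPartial, Read, Write,
    Frame, Alloc, Free, Open, Close, Call, AbduceCall, UnifyHeaps, UnifyPure,
    Pick, SubstRight). -/
inductive Deriv (maxUnfold : ℕ) : Ctx → Finset Var → Assn → Assn → Cmd → Prop
  | emp {Sg : Ctx} {Γ : Finset Var} {φ ψ : Expr} :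
      EV Γ ⟨φ, .emp⟩ ⟨ψ, .emp⟩ = ∅ → PImplies φ ψ →
      Deriv maxUnfold Sg Γ ⟨φ, .emp⟩ ⟨ψ, .emp⟩ .skip
  | inconsistency {Sg Γ} {φ : Expr} {P : Spatial} {Q : Assn} :
      (∀ s : Store, ¬ φ.holds s) →
      Deriv maxUnfold Sg Γ ⟨φ, P⟩ Q .error
  | substLeft {Sg Γ} {φ : Expr} {P : Spatial} {Q : Assn} {c x y} :
      PImplies φ (.eq (.var x) (.var y)) →
      Deriv maxUnfold Sg Γ (Assn.subst ⟨φ, P⟩ (Subst.single x (.var y)))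
        (Q.subst (Subst.single x (.var y))) c →
      Deriv maxUnfold Sg Γ ⟨φ, P⟩ Q c
  | nullNotLVal {Sg Γ} {φ : Expr} {P : Spatial} {Q : Assn} {c x ι} {e : Expr} :
      Deriv maxUnfold Sg Γ
        ⟨.and φ (.not (.eq (.var x) (.lit 0))), .star (.pts (.var x) ι e) P⟩ Q c →
      Deriv maxUnfold Sg Γ ⟨φ, .star (.pts (.var x) ι e) P⟩ Q c
  | starPartial {Sg Γ} {φ : Expr} {P : Spatial} {Q : Assn} {c x y} {ι ι' : ℕ} {e e' : Expr} :
      Deriv maxUnfold Sg Γ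
        ⟨.and φ (.not (.eq (.add (.var x) (.lit (ι : Val))) (.add (.var y) (.lit (ι' : Val))))),
         .star (.pts (.var x) ι e) (.star (.pts (.var y) ι' e') P)⟩ Q c →
      Deriv maxUnfold Sg Γ ⟨φ, .star (.pts (.var x) ι e) (.star (.pts (.var y) ι' e') P)⟩ Q c
  | read {Sg Γ} {φ : Expr} {P : Spatial} {Q : Assn} {c} {x a y : Var} {ι : ℕ} :
      a ∈ GV Γ ⟨φ, .star (.pts (.var x) ι (.var a)) P⟩ Q →
      y ∉ Γ → y ∉ Assn.vars ⟨φ, .star (.pts (.var x) ι (.var a)) P⟩ → y ∉ Q.vars →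
      Deriv maxUnfold Sg (insert y Γ)
        (Assn.subst ⟨φ, .star (.pts (.var x) ι (.var a)) P⟩ (Subst.single a (.var y)))
        (Q.subst (Subst.single a (.var y))) c →
      Deriv maxUnfold Sg Γ ⟨φ, .star (.pts (.var x) ι (.var a)) P⟩ Q (.seq (.read y x ι) c)
  | write {Sg Γ} {φ ψ : Expr} {P Q : Spatial} {c} {x : Var} {ι : ℕ} {e e' : Expr} :
      e.vars ⊆ Γ →
      Deriv maxUnfold Sg Γ ⟨φ, .star (.pts (.var x) ι e) P⟩ ⟨ψ, .star (.pts (.var x) ι e) Q⟩ c →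
      Deriv maxUnfold Sg Γ ⟨φ, .star (.pts (.var x) ι e') P⟩ ⟨ψ, .star (.pts (.var x) ι e) Q⟩
        (.seq (.write x ι e) c)
  | frame {Sg Γ} {φ ψ : Expr} {P Q R R' : Spatial} {c} :
      EV Γ ⟨φ, P⟩ ⟨ψ, Q⟩ ∩ R.vars = ∅ →
      R.eraseTags = R'.eraseTags →
      Deriv maxUnfold Sg Γ ⟨φ, P⟩ ⟨ψ, Q⟩ c →
      Deriv maxUnfold Sg Γ ⟨φ, .star P R⟩ ⟨ψ, .star Q R'⟩ c
  | unifyHeaps {Sg Γ} {φ ψ : Expr} {P Q R R' : Spatial} {c} {σ : Subst} :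
      (R'.subst σ).eraseTags = R.eraseTags →
      σ.domain ≠ ∅ → σ.domain ⊆ ↑(EV Γ ⟨φ, .star P R⟩ ⟨ψ, .star Q R'⟩) →
      Deriv maxUnfold Sg Γ ⟨φ, .star P R⟩ (Assn.subst ⟨ψ, .star Q R'⟩ σ) c →
      Deriv maxUnfold Sg Γ ⟨φ, .star P R⟩ ⟨ψ, .star Q R'⟩ c
  | pick {Sg Γ} {φ ψ : Expr} {P Q : Spatial} {c} {y : Var} {e : Expr} :
      y ∈ EV Γ ⟨φ, P⟩ ⟨ψ, Q⟩ →
      e.vars ⊆ Γ ∪ GV Γ ⟨φ, P⟩ ⟨ψ, Q⟩ →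
      Deriv maxUnfold Sg Γ ⟨φ, P⟩ (Assn.subst ⟨ψ, Q⟩ (Subst.single y e)) c →
      Deriv maxUnfold Sg Γ ⟨φ, P⟩ ⟨ψ, Q⟩ c
  | unifyPure {Sg Γ} {φ φ' ψ ψ' : Expr} {P Q : Spatial} {c} {σ : Subst} :
      ψ'.subst σ = φ' →
      σ.domain ≠ ∅ → σ.domain ⊆ ↑(EV Γ ⟨.and φ φ', P⟩ ⟨.and ψ ψ', Q⟩) →
      Deriv maxUnfold Sg Γ ⟨.and φ φ', P⟩ (Assn.subst ⟨.and ψ ψ', Q⟩ σ) c →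
      Deriv maxUnfold Sg Γ ⟨.and φ φ', P⟩ ⟨.and ψ ψ', Q⟩ c
  | substRight {Sg Γ} {P : Assn} {ψ : Expr} {Q : Spatial} {c} {x : Var} {e : Expr} :
      x ∈ EV Γ P ⟨.and ψ (.eq (.var x) e), Q⟩ →
      Deriv maxUnfold Sg Γ P (Assn.subst ⟨ψ, Q⟩ (Subst.single x e)) c →
      Deriv maxUnfold Sg Γ P ⟨.and ψ (.eq (.var x) e), Q⟩ c
  | alloc {Sg Γ} {φ ψ : Expr} {P Q R R' : Spatial} {z y : Var} {m : ℕ}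
      {es : List Expr} {ts : List Var} {c} :
      R = .star (.blk (.var z) m) (ptsRange z es) → es.length = m →
      z ∈ EV Γ ⟨φ, P⟩ ⟨ψ, .star Q R⟩ →
      ts.length = m →
      (∀ w ∈ y :: ts, w ∉ Γ ∧ w ∉ Assn.vars ⟨φ, P⟩ ∧ w ∉ Assn.vars ⟨ψ, .star Q R⟩) →
      R' = .star (.blk (.var y) m) (ptsRange y (ts.map .var)) →
      Deriv maxUnfold Sg (insert y Γ) ⟨φ, .star P R'⟩ ⟨ψ, .star Q R⟩ c →
      Deriv maxUnfold Sg Γ ⟨φ, P⟩ ⟨ψ, .star Q R⟩ (.seq (.malloc y m) c)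
  | free {Sg Γ} {φ : Expr} {P : Spatial} {Q : Assn} {R : Spatial} {x : Var} {m : ℕ}
      {es : List Expr} {c} :
      R = .star (.blk (.var x) m) (ptsRange x es) → es.length = m →
      x ∈ Γ → (∀ e ∈ es, Expr.vars e ⊆ Γ) →
      Deriv maxUnfold Sg Γ ⟨φ, P⟩ Q c →
      Deriv maxUnfold Sg Γ ⟨φ, .star P R⟩ Q (.seq (.free x m) c)
  | openR {Sg : Ctx} {Γ} {φ : Expr} {P : Spatial} {Q : Assn} {p : String}
      {args : List Expr} {ℓ : ℕ} {D : PredDef} {σ : Subst} {cs : List Cmd} :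
      D ∈ Sg.preds → D.name = p →
      (∀ a ∈ args, Expr.vars a ⊆ Γ) →
      D.params.length = args.length →
      ℓ < maxUnfold →
      σ = Subst.ofList (D.params.zip args) →
      cs.length = D.clauses.length →
      (∀ (j : ℕ) (hj : j < D.clauses.length) (hj' : j < cs.length),
        Deriv maxUnfold Sg Γ
          ⟨.and φ (.and ((D.clauses[j]'hj).guard.subst σ) ((D.clauses[j]'hj).pure.subst σ)),
           .star (((D.clauses[j]'hj).spat.subst σ).setTags (some (ℓ + 1))) P.eraseTags⟩
          Q (cs[j]'hj')) →
      Deriv maxUnfold Sg Γ ⟨φ, .star P (.pred p (some ℓ) args)⟩ Q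
        (iteChain (D.clauses.map (fun cl => cl.guard.subst σ)) cs)
  | close {Sg : Ctx} {Γ} {P : Assn} {ψ : Expr} {Q : Spatial} {p : String}
      {args : List Expr} {ℓ : ℕ} {D : PredDef} {σ : Subst} {k : ℕ} {c}
      (hk : k < D.clauses.length) :
      D ∈ Sg.preds → D.name = p →
      D.params.length = args.length →
      ℓ < maxUnfold →
      σ = Subst.ofList (D.params.zip args) →
      Deriv maxUnfold Sg Γ P
        ⟨.and ψ (.and ((D.clauses[k]'hk).guard.subst σ) ((D.clauses[k]'hk).pure.subst σ)),
         .star Q (((D.clauses[k]'hk).spat.subst σ).setTags (some (ℓ + 1)))⟩ c →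
      Deriv maxUnfold Sg Γ P ⟨ψ, .star Q (.pred p (some ℓ) args)⟩ c
  | callR {Sg : Ctx} {Γ} {φ : Expr} {P R : Spatial} {Q : Assn} {fs : FunSpec}
      {σ : Subst} {es : List Expr} {c} :
      fs ∈ Sg.funs →
      R = fs.pre.spat.subst σ →
      PImplies φ (fs.pre.pure.subst σ) →
      es = fs.params.map (fun x => (σ x).getD (.var x)) →
      (∀ e ∈ es, Expr.vars e ⊆ Γ) →
      Deriv maxUnfold Sg Γ
        ⟨.and φ (fs.post.pure.subst σ), .star P ((fs.post.spat.subst σ).eraseTags)⟩ Q c →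
      Deriv maxUnfold Sg Γ ⟨φ, .star P R⟩ Q (.seq (.call fs.name es) c)
  | abduceCall {Sg : Ctx} {Γ} {φ : Expr} {P R : Spatial} {Q : Assn} {fs : FunSpec}
      {σ : Subst} {Pf Ff Fh F' : Spatial} {c₁ c₂} :
      fs ∈ Sg.funs →
      fs.pre.spat = .star Pf Ff →
      ¬ Ff.hasPred → Ff ≠ .emp →
      P = Pf.subst σ → F' = Ff.subst σ →
      Deriv maxUnfold Sg Γ ⟨φ, Fh⟩ ⟨φ, F'⟩ c₁ →
      Deriv maxUnfold Sg Γ ⟨φ, .star P (.star F' R)⟩ Q c₂ →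
      Deriv maxUnfold Sg Γ ⟨φ, .star P (.star Fh R)⟩ Q (.seq c₁ c₂)

/-- The top-level SSL judgment for a goal named `f` with formal parameters `xs`:
    either the rule Induction is applied first (adding the recursive hypothesis
    to the context), or the derivation proceeds with the remaining rules. -/
inductive DerivTop (maxUnfold : ℕ) : Ctx → String → List Var → Assn → Assn → Cmd → Prop
  | induction {Sg : Ctx} {f : String} {xs : List Var} {φ : Expr} {p : String}
      {args : List Expr} {P : Spatial} {Q : Assn} {c} :
      Deriv maxUnfold
        ⟨Sg.preds,
         ⟨f, xs, ⟨φ, .star (.pred p (some 1) args) P.eraseTags⟩, Q.eraseTags⟩ :: Sg.funs⟩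
        xs.toFinset ⟨φ, .star (.pred p (some 0) args) P⟩ Q c →
      DerivTop maxUnfold Sg f xs ⟨φ, .star (.pred p (some 0) args) P⟩ Q c
  | plain {Sg : Ctx} {f : String} {xs : List Var} {P Q : Assn} {c} :
      Deriv maxUnfold Sg xs.toFinset P Q c →
      DerivTop maxUnfold Sg f xs P Q c


/-! The block `[x, m] ∗ ⊛ᵢ ⟨x, i⟩ ↦ eᵢ` owns exactly the cells `l, …, l + m - 1`, where `l` is
the value of `x`, so `free(x)` leaves precisely the part of the heap described by `P`, and the
premise applies to the rest of the run. Since the block mentions only program variables, adding it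
to the precondition changes neither the ghosts nor the existentials, and the ghost substitution
leaves it untouched. -/

theorem Expr.subst_eq_self {σ : Subst} {e : Expr} (hσ : ∀ y ∈ e.vars, σ y = none) :
    e.subst σ = e := by
  induction e with
  | lit => rfl
  | var y => simp [Expr.subst, hσ y (by simp [Expr.vars])]
  | not e ih => simp [Expr.subst, ih (by simpa [Expr.vars] using hσ)]
  | add e₁ e₂ ih₁ ih₂ | eq e₁ e₂ ih₁ ih₂ | and e₁ e₂ ih₁ ih₂ =>
    simp only [Expr.vars, Finset.mem_union] at hσ
    simp [Expr.subst, ih₁ fun y hy => hσ y (.inl hy), ih₂ fun y hy => hσ y (.inr hy)]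

theorem Spatial.vars_subset_of_mem_args {p : String} {t : Option ℕ} {args : List Expr}
    {e : Expr} (he : e ∈ args) : e.vars ⊆ (Spatial.pred p t args).vars := by
  induction args with
  | nil => simp at he
  | cons a args ih =>
    simp only [Spatial.vars, List.foldr_cons] at ih ⊢
    rcases List.mem_cons.1 he with rfl | he
    · exact Finset.subset_union_left
    · exact (ih he).trans Finset.subset_union_right

theorem Spatial.subst_eq_self {σ : Subst} {S : Spatial} (hσ : ∀ y ∈ S.vars, σ y = none) :
    S.subst σ = S := by
  induction S with
  | emp => rfl
  | pts e₁ ι e₂ =>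
    simp only [Spatial.vars, Finset.mem_union] at hσ
    simp [Spatial.subst, Expr.subst_eq_self fun y hy => hσ y (.inl hy),
      Expr.subst_eq_self fun y hy => hσ y (.inr hy)]
  | blk e m => simp [Spatial.subst, Expr.subst_eq_self (by simpa [Spatial.vars] using hσ)]
  | pred p t args =>
    simp only [Spatial.subst, Spatial.pred.injEq, true_and]
    refine (List.map_congr_left fun e he => ?_).trans (List.map_id args)
    exact Expr.subst_eq_self fun y hy => hσ y (Spatial.vars_subset_of_mem_args he hy)
  | star P R ihP ihR =>
    simp only [Spatial.vars, Finset.mem_union] at hσ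
    simp [Spatial.subst, ihP fun y hy => hσ y (.inl hy), ihR fun y hy => hσ y (.inr hy)]

theorem IsValSubst.eq_none_of_notMem {σ : Subst} {d : Finset Var} (hσ : IsValSubst σ d)
    {y : Var} (hy : y ∉ d) : σ y = none :=
  Option.not_isSome_iff_eq_none.1 fun h => hy ((hσ.1 y).2 h)

theorem GV_star_of_vars_subset {Γ : Finset Var} {φ : Expr} {P R : Spatial} {Q : Assn}
    (hR : R.vars ⊆ Γ) : GV Γ ⟨φ, .star P R⟩ Q = GV Γ ⟨φ, P⟩ Q := by
  ext a
  have := @hR a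
  simp only [GV, Assn.vars, Spatial.vars, Finset.mem_sdiff, Finset.mem_union] at this ⊢
  tauto

theorem EV_star_of_vars_subset {Γ : Finset Var} {φ : Expr} {P R : Spatial} {Q : Assn}
    (hR : R.vars ⊆ Γ) : EV Γ ⟨φ, .star P R⟩ Q = EV Γ ⟨φ, P⟩ Q := by
  ext a
  have := @hR a
  simp only [EV, Assn.vars, Spatial.vars, Finset.mem_sdiff, Finset.mem_union] at this ⊢
  tauto

theorem satS_star_blk_iff {I : Interp} {h : Heap} {s : Store} {e : Expr} {m : ℕ}
    {S : Spatial} : SatS I h s (.star (.blk e m) S) ↔ SatS I h s S := by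
  simp only [SatS]
  constructor
  · rintro ⟨_, h₂, -, rfl, rfl, hS⟩
    rwa [Finmap.empty_union]
  · exact fun hS => ⟨∅, h, Finmap.disjoint_empty h, Finmap.empty_union.symm, rfl, hS⟩

theorem heapSize_le_union_left (h₁ h₂ : Heap) : heapSize h₁ ≤ heapSize (h₁ ∪ h₂) := by
  simp only [heapSize, Finmap.keys_union]
  exact Finset.card_le_card Finset.subset_union_left

/-- `ptsRange` generalised to the offsets `k, k + 1, …`, so that it can be taken apart by
induction on the list. -/
def ptsFrom (x : Var) (k : ℕ) (es : List Expr) : Spatial :=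
  (es.zipIdx k).foldr (fun p acc => .star (.pts (.var x) p.2 p.1) acc) .emp

theorem ptsRange_eq_ptsFrom (x : Var) (es : List Expr) : ptsRange x es = ptsFrom x 0 es := rfl

@[simp]
theorem ptsFrom_nil (x : Var) (k : ℕ) : ptsFrom x k [] = .emp := rfl

@[simp]
theorem ptsFrom_cons (x : Var) (k : ℕ) (e : Expr) (es : List Expr) :
    ptsFrom x k (e :: es) = .star (.pts (.var x) k e) (ptsFrom x (k + 1) es) := by
  simp [ptsFrom, List.zipIdx_cons]

theorem vars_ptsFrom_subset {Γ : Finset Var} {x : Var} (hx : x ∈ Γ) {es : List Expr}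
    (hes : ∀ e ∈ es, e.vars ⊆ Γ) (k : ℕ) : (ptsFrom x k es).vars ⊆ Γ := by
  induction es generalizing k with
  | nil => simp [Spatial.vars]
  | cons e es ih =>
    simp only [ptsFrom_cons, Spatial.vars, Expr.vars, Finset.union_subset_iff,
      Finset.singleton_subset_iff]
    exact ⟨⟨hx, hes e List.mem_cons_self⟩,
      ih (fun e' he' => hes e' (List.mem_cons_of_mem _ he')) _⟩

theorem mem_of_satS_ptsFrom {I : Interp} {s : Store} {x : Var} {l : ℕ}
    (hx : s.lookup x = some (l : Val)) {es : List Expr} {k : ℕ} {h : Heap}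
    (hsat : SatS I h s (ptsFrom x k es)) (a : ℕ) :
    a ∈ h ↔ l + k ≤ a ∧ a < l + k + es.length := by
  induction es generalizing k h with
  | nil =>
    simp only [ptsFrom_nil, SatS] at hsat
    simp [hsat, Finmap.notMem_empty]
  | cons e es ih =>
    rw [ptsFrom_cons] at hsat
    obtain ⟨_, h₂, -, rfl, ⟨l', v, -, hl', -, rfl⟩, hrest⟩ := hsat
    have hl : l' = l := by
      have : s.lookup x = some (l' : Val) := hl'
      exact_mod_cast Option.some.inj (this.symm.trans hx)
    subst hl
    rw [Finmap.mem_union, Finmap.mem_singleton, ih hrest, List.length_cons]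
    omega

theorem lookup_freeCells (l m : ℕ) (h : Heap) (a : ℕ) :
    (freeCells l m h).lookup a = if l ≤ a ∧ a < l + m then none else h.lookup a := by
  induction m generalizing l with
  | zero => simp [freeCells]
  | succ m ih =>
    simp only [freeCells]
    by_cases ha : a = l
    · subst ha
      simp [Finmap.lookup_erase]
    · rw [Finmap.lookup_erase_ne ha, ih]
      split_ifs <;> first | rfl | omega

theorem freeCells_union_eq_left {h₁ h₂ : Heap} (hd : h₁.Disjoint h₂) {l m : ℕ}
    (hdom : ∀ a, a ∈ h₂ ↔ l ≤ a ∧ a < l + m) :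
    freeCells l m (h₁ ∪ h₂) = h₁ := by
  refine Finmap.ext_lookup fun a => ?_
  rw [lookup_freeCells]
  split_ifs with ha
  · exact (Finmap.lookup_eq_none.2 fun h₁a => hd a h₁a ((hdom a).2 ha)).symm
  · by_cases h₁a : a ∈ h₁
    · exact Finmap.lookup_union_left h₁a
    · rw [Finmap.lookup_union_right h₁a, Finmap.lookup_eq_none.2 (mt (hdom a).1 ha),
        Finmap.lookup_eq_none.2 h₁a]

theorem steps_seq_free_inv {Δ : FunDict} {h h' : Heap} {x : Var} {m : ℕ} {c : Cmd}
    {s s' : Store} (hs : Steps Δ (h, [(.seq (.free x m) c, s)]) (h', [(.skip, s')])) :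
    ∃ l : Loc, s.lookup x = some (l : Val) ∧
      Steps Δ (freeCells l m h, [(c, s)]) (h', [(.skip, s')]) := by
  rcases hs.cases_head with heq | ⟨_, hstep, hs⟩
  · simp at heq
  cases hstep with
  | head hfree => cases hfree
  | seqStep hfree =>
    cases hfree with
    | head hfree =>
      cases hfree with
      | free hx _ =>
        refine ⟨_, hx, ?_⟩
        rcases hs.cases_head with heq | ⟨_, hstep, hs⟩
        · simp at heq
        cases hstep with
        | head hskip => cases hskip
        | seqStep hskip => cases hskip with | head hskip => cases hskip
        | seqSkip => exact hs

theorem free_sound_general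
    (I : Interp) (n : ℕ) (Δ : FunDict) (Γ : Finset Var)
    (φ : Expr) (P : Spatial) (Q : Assn) (R : Spatial) (x : Var) (m : ℕ)
    (es : List Expr) (c : Cmd)
    (hR : R = .star (.blk (.var x) m) (ptsRange x es)) (hlen : es.length = m)
    (hx : x ∈ Γ) (hes : ∀ e ∈ es, Expr.vars e ⊆ Γ)
    (hprem : Valid I Δ Γ ⟨φ, P⟩ c Q n) :
    Valid I Δ Γ ⟨φ, .star P R⟩ (.seq (.free x m) c) Q n := by
  have hRΓ : R.vars ⊆ Γ := by
    rw [hR, ptsRange_eq_ptsFrom]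
    simp only [Spatial.vars, Expr.vars, Finset.singleton_union]
    exact Finset.insert_subset hx (vars_ptsFrom_subset hx hes 0)
  intro h h' s s' hsize hsteps hkeys σ hσ ⟨hpure, hspat⟩
  rw [GV_star_of_vars_subset hRΓ] at hσ
  have hσR : R.subst σ = R :=
    Spatial.subst_eq_self fun y hy => hσ.eq_none_of_notMem (by simp [GV, hRΓ hy])
  obtain ⟨h₁, h₂, hd, rfl, hP, hR₂⟩ := hspat
  rw [hσR, hR, satS_star_blk_iff, ptsRange_eq_ptsFrom] at hR₂
  obtain ⟨l, hl, hsteps⟩ := steps_seq_free_inv hsteps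
  have hdom : ∀ a, a ∈ h₂ ↔ l ≤ a ∧ a < l + m := by
    simpa [hlen] using mem_of_satS_ptsFrom hl hR₂
  rw [freeCells_union_eq_left hd hdom] at hsteps
  have hsize₁ : heapSize h₁ ≤ n := (heapSize_le_union_left h₁ h₂).trans hsize
  obtain ⟨σev, hσev, hQ⟩ := hprem h₁ h' s s' hsize₁ hsteps hkeys σ hσ ⟨hpure, hP⟩
  exact ⟨σev, by rwa [EV_star_of_vars_subset hRΓ], hQ⟩

/-- **Soundness of the Free rule**. -/
theorem free_sound
    (I : Interp) (n : ℕ) (Δ : FunDict) (Sg : Ctx) (Γ : Finset Var)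
    (φ : Expr) (P : Spatial) (Q : Assn) (R : Spatial) (x : Var) (m : ℕ)
    (es : List Expr) (c : Cmd)
    (hR : R = .star (.blk (.var x) m) (ptsRange x es)) (hlen : es.length = m)
    (hx : x ∈ Γ) (hes : ∀ e ∈ es, Expr.vars e ⊆ Γ)
    (hprem : Valid I Δ Γ ⟨φ, P⟩ c Q n) :
    Valid I Δ Γ ⟨φ, .star P R⟩ (.seq (.free x m) c) Q n :=
  free_sound_general I n Δ Γ φ P Q R x m es c hR hlen hx hes hprem

end SSL
end

section
/- Soundness of the StarPartial rule: for every n ∈ ℕ and every function dictionary Δ, if the specification Σ; Γ; {φ ∧ (x + ι ≠ y + ι'); ⟨x,ι⟩ ↦ e ∗ ⟨y,ι'⟩ ↦ e' ∗ P} c {Q} is n-valid w.r.t. Δ, then the specification Σ; Γ; {φ; ⟨x,ι⟩ ↦ e ∗ ⟨y,ι'⟩ ↦ e' ∗ P} c {Q} is n-valid w.r.t. Δ; this is because any heap–store pair satisfying a precondition containing the two separated heaplets ⟨x,ι⟩ ↦ e and ⟨y,ι'⟩ ↦ e' must have ⟦x⟧ₛ + ι ≠ ⟦y⟧ₛ +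 ι' (separating conjunction requires the corresponding singleton sub-heaps to be disjoint), so it also satisfies the strengthened precondition. -/
set_option maxHeartbeats 1000000

namespace SSL

/-
Two points-to heaplets separated by `∗` own disjoint singleton heaps, so their addresses
⟦x⟧ₛ + ι and ⟦y⟧ₛ + ι' differ. Hence every state satisfying the precondition of the
conclusion also satisfies the strengthened precondition of the premise, and since the
added conjunct mentions only x and y, both preconditions have the same ghosts and
existentials.
-/

theorem Expr.holds_and_iff {a b : Expr} {s : Store} :
    (Expr.and a b).holds s ↔ a.holds s ∧ b.holds s := by
  simp only [Expr.holds, Expr.eval]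
  cases a.eval s <;> cases b.eval s <;> simp

theorem Expr.holds_not_eq_of_eval_ne {a b : Expr} {s : Store} {u w : Val}
    (ha : a.eval s = some u) (hb : b.eval s = some w) (hne : u ≠ w) :
    (Expr.not (.eq a b)).holds s := by
  simp [Expr.holds, Expr.eval, ha, hb, hne]

theorem Expr.eval_add_lit {a : Expr} {s : Store} {u : Val} (ha : a.eval s = some u) (k : Val) :
    (Expr.add a (.lit k)).eval s = some (u + k) := by
  simp [Expr.eval, ha]

theorem SatS.pts_addr_ne_of_star {I : Interp} {h : Heap} {s : Store} {a b e e' : Expr}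
    {ι ι' : ℕ} {P : Spatial}
    (hsat : SatS I h s (.star (.pts a ι e) (.star (.pts b ι' e') P))) :
    ∃ la lb : Loc, a.eval s = some (la : Val) ∧ b.eval s = some (lb : Val) ∧
      la + ι ≠ lb + ι' := by
  obtain ⟨h₁, h₂, hdisj, -, ⟨la, _, -, ha, -, h₁_eq⟩, h₂₁, h₂₂, -, h₂_eq, ⟨lb, _, -, hb, -, h₂₁_eq⟩,
    -⟩ := hsat
  refine ⟨la, lb, ha, hb, fun hEq => hdisj (la + ι) (by simp [h₁_eq]) ?_⟩
  simp [h₂_eq, h₂₁_eq, hEq]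

theorem Assn.vars_and_pure_of_subset {φ ψ : Expr} {S : Spatial} (hψ : ψ.vars ⊆ S.vars) :
    Assn.vars ⟨.and φ ψ, S⟩ = Assn.vars ⟨φ, S⟩ := by
  simp only [Assn.vars, Expr.vars]
  rw [Finset.union_assoc, Finset.union_eq_right.2 hψ]

theorem Valid.of_sat_imp_pre {I : Interp} {Δ : FunDict} {Γ : Finset Var} {P P' Q : Assn}
    {c : Cmd} {n : ℕ} (hvars : P'.vars = P.vars)
    (himp : ∀ h s σ, Sat I h s (P.subst σ) → Sat I h s (P'.subst σ))
    (hvalid : Valid I Δ Γ P' c Q n) : Valid I Δ Γ P c Q n := by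
  intro h h' s s' hsize hsteps hkeys σgv hσgv hP
  have hGV : GV Γ P' Q = GV Γ P Q := by simp only [GV, hvars]
  have hEV : EV Γ P' Q = EV Γ P Q := by simp only [EV, hvars]
  obtain ⟨σev, hσev, hQ⟩ :=
    hvalid h h' s s' hsize hsteps hkeys σgv (hGV ▸ hσgv) (himp h s σgv hP)
  exact ⟨σev, hEV ▸ hσev, hQ⟩

theorem starPartial_sound_general
    (I : Interp) (n : ℕ) (Δ : FunDict) (Γ : Finset Var)
    (φ : Expr) (P : Spatial) (Q : Assn) (x y : Var) (ι ι' : ℕ) (e e' : Expr) (c : Cmd)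
    (hprem : Valid I Δ Γ
      ⟨.and φ (.not (.eq (.add (.var x) (.lit (ι : Val))) (.add (.var y) (.lit (ι' : Val))))),
       .star (.pts (.var x) ι e) (.star (.pts (.var y) ι' e') P)⟩ c Q n) :
    Valid I Δ Γ ⟨φ, .star (.pts (.var x) ι e) (.star (.pts (.var y) ι' e') P)⟩ c Q n := by
  refine Valid.of_sat_imp_pre (Assn.vars_and_pure_of_subset ?_) ?_ hprem
  · intro z
    simp only [Expr.vars, Spatial.vars, Finset.mem_union, Finset.mem_singleton]
    tauto
  · rintro h s σ ⟨hφ, hS⟩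
    obtain ⟨la, lb, ha, hb, hne⟩ := SatS.pts_addr_ne_of_star hS
    refine ⟨Expr.holds_and_iff.2 ⟨hφ, Expr.holds_not_eq_of_eval_ne
      (Expr.eval_add_lit ha _) (Expr.eval_add_lit hb _) ?_⟩, hS⟩
    exact_mod_cast hne

/-- **Soundness of the StarPartial rule**. -/
theorem starPartial_sound
    (I : Interp) (n : ℕ) (Δ : FunDict) (Sg : Ctx) (Γ : Finset Var)
    (φ : Expr) (P : Spatial) (Q : Assn) (x y : Var) (ι ι' : ℕ) (e e' : Expr) (c : Cmd)
    (hprem : Valid I Δ Γ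
      ⟨.and φ (.not (.eq (.add (.var x) (.lit (ι : Val))) (.add (.var y) (.lit (ι' : Val))))),
       .star (.pts (.var x) ι e) (.star (.pts (.var y) ι' e') P)⟩ c Q n) :
    Valid I Δ Γ ⟨φ, .star (.pts (.var x) ι e) (.star (.pts (.var y) ι' e') P)⟩ c Q n :=
  starPartial_sound_general I n Δ Γ φ P Q x y ι ι' e e' c hprem

end SSL
end
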